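/- arXiv:1909.00880 — 11 statements merged into one kernel-verified Lean document; each statement's English description precedes it below -/
import Mathlib

section
/- A real symmetric 2×2 matrix A = (a_ij) is strictly copositive (i.e., xᵀAx > 0 for all nonzero x in the nonnegative orthant) if and only if a_11 > 0, a_22 > 0, and a_12 + √(a_11 a_22) > 0. -/
/-! With `a, c ≥ 0` the binary form splits as
`a x² + 2 b x y + c y² = (√a x - √c y)² + 2 (b + √(a c)) x y`.
On the closed quadrant the square is nonnegative and `x y ≥ 0`, which gives sufficiency;
evaluating at `(√c, √a)`, where the square vanishes, shows `b + √(a c) > 0` is necessary. -/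

open Matrix

lemma dotProduct_mulVec_self_fin_two {R : Type*} [CommRing R] {A : Matrix (Fin 2) (Fin 2) R}
    (hA : A.IsSymm) (x : Fin 2 → R) :
    x ⬝ᵥ A *ᵥ x = A 0 0 * x 0 ^ 2 + 2 * A 0 1 * x 0 * x 1 + A 1 1 * x 1 ^ 2 := by
  simp only [dotProduct, mulVec, Fin.sum_univ_two, hA.apply 1 0]
  ring

lemma binaryQuadratic_eq_sq_add {a c : ℝ} (ha : 0 ≤ a) (hc : 0 ≤ c) (b x y : ℝ) :
    a * x ^ 2 + 2 * b * x * y + c * y ^ 2 =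
      (√a * x - √c * y) ^ 2 + 2 * (b + √(a * c)) * (x * y) := by
  rw [Real.sqrt_mul ha]
  linear_combination (-x ^ 2) * Real.sq_sqrt ha - y ^ 2 * Real.sq_sqrt hc

lemma binaryQuadratic_sqrt_sqrt {a c : ℝ} (ha : 0 ≤ a) (hc : 0 ≤ c) (b : ℝ) :
    a * √c ^ 2 + 2 * b * √c * √a + c * √a ^ 2 = 2 * √(a * c) * (b + √(a * c)) := by
  rw [binaryQuadratic_eq_sq_add ha hc, Real.sqrt_mul ha]
  ring

lemma binaryQuadratic_pos_on_quadrant_iff {a b c : ℝ} :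
    (∀ x y : ℝ, 0 ≤ x → 0 ≤ y → (x ≠ 0 ∨ y ≠ 0) → 0 < a * x ^ 2 + 2 * b * x * y + c * y ^ 2) ↔
      0 < a ∧ 0 < c ∧ 0 < b + √(a * c) := by
  constructor
  · intro h
    have ha : 0 < a := by simpa using h 1 0 zero_le_one le_rfl (.inl one_ne_zero)
    have hc : 0 < c := by simpa using h 0 1 le_rfl zero_le_one (.inr one_ne_zero)
    have hval := h √c √a (Real.sqrt_nonneg c) (Real.sqrt_nonneg a) (.inl (Real.sqrt_pos.2 hc).ne')
    rw [binaryQuadratic_sqrt_sqrt ha.le hc.le] at hval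
    have hac : 0 < 2 * √(a * c) := by positivity
    exact ⟨ha, hc, pos_of_mul_pos_right hval hac.le⟩
  · rintro ⟨ha, hc, hb⟩ x y hx hy hxy
    rcases hx.eq_or_lt with rfl | hx
    · have hy : 0 < y := hy.lt_of_ne' (hxy.resolve_left fun h => h rfl)
      simpa using mul_pos hc (pow_pos hy 2)
    rcases hy.eq_or_lt with rfl | hy
    · simpa using mul_pos ha (pow_pos hx 2)
    rw [binaryQuadratic_eq_sq_add ha.le hc.le]
    exact add_pos_of_nonneg_of_pos (sq_nonneg _) (by positivity)

theorem strictly_copositive_two_by_two (A : Matrix (Fin 2) (Fin 2) ℝ) (hA : A.IsSymm) :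
    (∀ x : Fin 2 → ℝ, (∀ i, 0 ≤ x i) → x ≠ 0 → 0 < dotProduct x (A.mulVec x)) ↔
      (0 < A 0 0 ∧ 0 < A 1 1 ∧ 0 < A 0 1 + Real.sqrt (A 0 0 * A 1 1)) := by
  rw [← binaryQuadratic_pos_on_quadrant_iff]
  constructor
  · intro h x y hx hy hxy
    have hv := h ![x, y] (Fin.forall_fin_two.2 ⟨hx, hy⟩) (cons_nonzero_iff.2 (by simpa using hxy))
    rwa [dotProduct_mulVec_self_fin_two hA] at hv
  · intro h x hx hx0
    rw [dotProduct_mulVec_self_fin_two hA]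
    refine h _ _ (hx 0) (hx 1) ?_
    contrapose! hx0
    ext i
    fin_cases i <;> simp [hx0.1, hx0.2]
end

section
/- Let p(t) = a t² + 2b(1−t)t + c(1−t)² be a quadratic Bernstein–Bézier polynomial on [0,1]. Then p(t) ≥ 0 for all t ∈ [0,1] if and only if a ≥ 0, c ≥ 0, and b + √(ac) ≥ 0. -/
/-!
Substituting `a = s²`, `c = r²` gives the sum-of-squares form
`p(t) = (s t - r (1 - t))² + 2 (b + s r) t (1 - t)`, so the conditions suffice.
Conversely `a = p(1)` and `c = p(0)`, and for `b < 0` the vertex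
`t = (c - b) / (a + c - 2b)` lies in `[0, 1]` and carries the value
`(ac - b²) / (a + c - 2b)`, which forces `b² ≤ ac`.
-/

open Set

section CommRing

variable {R : Type*} [CommRing R]

def bezierQuad (a b c t : R) : R :=
  a * t ^ 2 + 2 * b * (1 - t) * t + c * (1 - t) ^ 2

@[simp]
theorem bezierQuad_zero (a b c : R) : bezierQuad a b c 0 = c := by
  simp [bezierQuad]

@[simp]
theorem bezierQuad_one (a b c : R) : bezierQuad a b c 1 = a := by
  simp [bezierQuad]

theorem bezierQuad_sq_sq (s b r t : R) :
    bezierQuad (s ^ 2) b (r ^ 2) t = (s * t - r * (1 - t)) ^ 2 + 2 * (b + s * r) * t * (1 - t) := by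
  unfold bezierQuad; ring

end CommRing

theorem bezierQuad_vertex {K : Type*} [Field K] {a b c : K} (h : a + c - 2 * b ≠ 0) :
    bezierQuad a b c ((c - b) / (a + c - 2 * b)) = (a * c - b ^ 2) / (a + c - 2 * b) := by
  set D := a + c - 2 * b
  have h1 : 1 - (c - b) / D = (a - b) / D := by
    field_simp; ring
  rw [bezierQuad, h1]
  field_simp
  ring

theorem bezierQuad_nonneg {a b c t : ℝ} (ha : 0 ≤ a) (hc : 0 ≤ c)
    (hb : 0 ≤ b + √a * √c) (ht : t ∈ Icc 0 1) : 0 ≤ bezierQuad a b c t := by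
  rw [← Real.sq_sqrt ha, ← Real.sq_sqrt hc, bezierQuad_sq_sq]
  have : 0 ≤ t * (1 - t) := mul_nonneg ht.1 (sub_nonneg.2 ht.2)
  nlinarith [sq_nonneg (√a * t - √c * (1 - t))]

theorem sq_le_mul_of_bezierQuad_nonneg {a b c : ℝ} (ha : 0 ≤ a) (hc : 0 ≤ c) (hb : b < 0)
    (h : ∀ t ∈ Icc 0 1, 0 ≤ bezierQuad a b c t) : b ^ 2 ≤ a * c := by
  have hD : 0 < a + c - 2 * b := by linarith
  have hvertex : (c - b) / (a + c - 2 * b) ∈ Icc 0 1 :=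
    ⟨div_nonneg (by linarith) hD.le, (div_le_one hD).2 (by linarith)⟩
  have := h _ hvertex
  rw [bezierQuad_vertex hD.ne', le_div_iff₀ hD, zero_mul] at this
  linarith

theorem bernstein_bezier_nonneg (a b c : ℝ) :
    (∀ t ∈ Set.Icc (0 : ℝ) 1, 0 ≤ a * t ^ 2 + 2 * b * (1 - t) * t + c * (1 - t) ^ 2) ↔
      (0 ≤ a ∧ 0 ≤ c ∧ 0 ≤ b + Real.sqrt (a * c)) := by
  change (∀ t ∈ Icc (0 : ℝ) 1, 0 ≤ bezierQuad a b c t) ↔ _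
  constructor
  · intro h
    have ha : 0 ≤ a := bezierQuad_one a b c ▸ h 1 (right_mem_Icc.2 zero_le_one)
    have hc : 0 ≤ c := bezierQuad_zero a b c ▸ h 0 (left_mem_Icc.2 zero_le_one)
    refine ⟨ha, hc, ?_⟩
    rcases le_or_gt 0 b with hb | hb
    · positivity
    · have hsq : (-b) ^ 2 ≤ a * c := by
        rw [neg_sq]; exact sq_le_mul_of_bezierQuad_nonneg ha hc hb h
      linarith [Real.le_sqrt_of_sq_le hsq]
  · rintro ⟨ha, hc, hb⟩ t ht
    rw [Real.sqrt_mul ha] at hb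
    exact bezierQuad_nonneg ha hc hb ht
end

section
/- Let a₀ > 0, a₄ > 0 and set I = a₀a₄ − 4a₁a₃ + 3a₂², J = a₀a₂a₄ + 2a₁a₂a₃ − a₂³ − a₀a₃² − a₁²a₄, H = a₀a₂ − a₁². If I³ − 27J² > 0 and H ≥ 0, then f(t) = a₀t⁴ + 4a₁t³ + 6a₂t² + 4a₃t + a₄ > 0 for all real t ≠ 0. -/
/-!
After the substitution `z = a₀ t + a₁`, `a₀³ f(t)` becomes the depressed quartic
`z⁴ + 6Hz² + 4Gz + R`, whose invariants `I' = R + 3H²` and `J' = HR - H³ - G²` equal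
`a₀² I` and `a₀³ J`. Ferrari's decomposition
`z⁴ + 6Hz² + 4Gz + R = (z² + H - w)² + ((4H + 2w) z² + 4Gz + R - (H - w)²)` with
`w = √(I'/3)` turns the discriminant of the quadratic remainder into `-16 (J' + w³)`, which is
negative because `w⁶ = (I'/3)³ > J'²`; and its leading coefficient is positive because `H ≥ 0`.
-/

theorem quadratic_pos_of_discrim_neg {K : Type*} [Field K] [LinearOrder K] [IsStrictOrderedRing K]
    {a b c : K} (ha : 0 < a) (h : discrim a b c < 0) (x : K) : 0 < a * x ^ 2 + b * x + c := by
  have hcomplete_square : 4 * a * (a * x ^ 2 + b * x + c) = (2 * a * x + b) ^ 2 - discrim a b c := by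
    rw [discrim]; ring
  refine pos_of_mul_pos_right (a := 4 * a) ?_ (by positivity)
  rw [hcomplete_square]
  nlinarith [sq_nonneg (2 * a * x + b)]

theorem sqrt_div_three_pow_three_add_pos {I J : ℝ} (hI : 0 ≤ I) (h : 27 * J ^ 2 < I ^ 3) :
    0 < √(I / 3) ^ 3 + J := by
  have hJ : J ^ 2 < (√(I / 3) ^ 3) ^ 2 := by
    rw [← pow_mul, show 3 * 2 = 2 * 3 by rfl, pow_mul, Real.sq_sqrt (by positivity)]
    linarith
  linarith [neg_abs_le J, abs_lt_of_sq_lt_sq hJ (by positivity)]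

theorem depressed_quartic_pos {p q r : ℝ} (hp : 0 ≤ p)
    (h : 27 * (p * r - p ^ 3 - q ^ 2) ^ 2 < (r + 3 * p ^ 2) ^ 3) (z : ℝ) :
    0 < z ^ 4 + 6 * p * z ^ 2 + 4 * q * z + r := by
  have hI : 0 < r + 3 * p ^ 2 :=
    (Odd.pow_pos_iff (by decide)).mp ((by positivity : (0 : ℝ) ≤ 27 * _).trans_lt h)
  set w := √((r + 3 * p ^ 2) / 3)
  have hw : 0 < w := Real.sqrt_pos.mpr (by positivity)
  have hw2 : w ^ 2 = (r + 3 * p ^ 2) / 3 := Real.sq_sqrt (by positivity)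
  have hdecomp : z ^ 4 + 6 * p * z ^ 2 + 4 * q * z + r
      = (z ^ 2 + (p - w)) ^ 2 + ((4 * p + 2 * w) * z ^ 2 + 4 * q * z + (r - (p - w) ^ 2)) := by
    ring
  have hdiscrim : discrim (4 * p + 2 * w) (4 * q) (r - (p - w) ^ 2) < 0 := by
    have : discrim (4 * p + 2 * w) (4 * q) (r - (p - w) ^ 2)
        = -16 * (w ^ 3 + (p * r - p ^ 3 - q ^ 2)) := by
      rw [discrim]
      linear_combination (24 * w) * hw2
    linarith [sqrt_div_three_pow_three_add_pos hI.le h]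
  have hremainder := quadratic_pos_of_discrim_neg (by positivity) hdiscrim z
  rw [hdecomp]
  positivity

theorem quartic_pos_of_discriminant_general (a0 a1 a2 a3 a4 : ℝ) (ha0 : 0 < a0)
    (hΔ : 0 < (a0 * a4 - 4 * a1 * a3 + 3 * a2 ^ 2) ^ 3
        - 27 * (a0 * a2 * a4 + 2 * a1 * a2 * a3 - a2 ^ 3 - a0 * a3 ^ 2 - a1 ^ 2 * a4) ^ 2)
    (hH : 0 ≤ a0 * a2 - a1 ^ 2) :
    ∀ t : ℝ, t ≠ 0 →
      0 < a0 * t ^ 4 + 4 * a1 * t ^ 3 + 6 * a2 * t ^ 2 + 4 * a3 * t + a4 := by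
  intro t _
  set H := a0 * a2 - a1 ^ 2
  set G := a0 ^ 2 * a3 - 3 * a0 * a1 * a2 + 2 * a1 ^ 3
  set R := a0 ^ 3 * a4 + 6 * a0 * a1 ^ 2 * a2 - 4 * a0 ^ 2 * a1 * a3 - 3 * a1 ^ 4
  have hinvariants : (R + 3 * H ^ 2) ^ 3 - 27 * (H * R - H ^ 3 - G ^ 2) ^ 2
      = a0 ^ 6 * ((a0 * a4 - 4 * a1 * a3 + 3 * a2 ^ 2) ^ 3
        - 27 * (a0 * a2 * a4 + 2 * a1 * a2 * a3 - a2 ^ 3 - a0 * a3 ^ 2 - a1 ^ 2 * a4) ^ 2) := by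
    ring
  have hdepressed : a0 ^ 3 * (a0 * t ^ 4 + 4 * a1 * t ^ 3 + 6 * a2 * t ^ 2 + 4 * a3 * t + a4)
      = (a0 * t + a1) ^ 4 + 6 * H * (a0 * t + a1) ^ 2 + 4 * G * (a0 * t + a1) + R := by
    ring
  refine pos_of_mul_pos_right (a := a0 ^ 3) ?_ (by positivity)
  rw [hdepressed]
  exact depressed_quartic_pos hH (sub_pos.mp (hinvariants ▸ mul_pos (pow_pos ha0 6) hΔ)) _

theorem quartic_pos_of_discriminant (a0 a1 a2 a3 a4 : ℝ) (ha0 : 0 < a0) (ha4 : 0 < a4)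
    (hΔ : 0 < (a0 * a4 - 4 * a1 * a3 + 3 * a2 ^ 2) ^ 3
        - 27 * (a0 * a2 * a4 + 2 * a1 * a2 * a3 - a2 ^ 3 - a0 * a3 ^ 2 - a1 ^ 2 * a4) ^ 2)
    (hH : 0 ≤ a0 * a2 - a1 ^ 2) :
    ∀ t : ℝ, t ≠ 0 →
      0 < a0 * t ^ 4 + 4 * a1 * t ^ 3 + 6 * a2 * t ^ 2 + 4 * a3 * t + a4 :=
  quartic_pos_of_discriminant_general a0 a1 a2 a3 a4 ha0 hΔ hH
end

section
/- Let g(t) = at⁴ + bt³ + ct² + dt + e with a > 0 and e > 0, and set α = b a^(−3/4) e^(−1/4), β = c a^(−1/2) e^(−1/2), γ = d a^(−1/4) e^(−3/4). If β ≤ 6, α > −(β+2)/2 and γ > −(β+2)/2, then g(t) ≥ 0 for all t > 0. -/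
/-!
Writing `a = u⁴`, `e = v⁴` and substituting `t = v s / u` gives `g(t) = e · p(s)` with
`p(s) = s⁴ + α s³ + β s² + γ s + 1`. For `s ≥ 0` the normalized quartic is a sum of nonnegative terms:
`p(s) = (α + (β+2)/2) s³ + (γ + (β+2)/2) s + (s - 1)⁴ + (6 - β)/2 · s (s - 1)²`.
-/

theorem normalized_quartic_nonneg {α β γ s : ℝ} (hs : 0 ≤ s) (hβ : β ≤ 6)
    (hα : -((β + 2) / 2) ≤ α) (hγ : -((β + 2) / 2) ≤ γ) :
    0 ≤ s ^ 4 + α * s ^ 3 + β * s ^ 2 + γ * s + 1 := by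
  have hdecomp : s ^ 4 + α * s ^ 3 + β * s ^ 2 + γ * s + 1 =
      (α + (β + 2) / 2) * s ^ 3 + (γ + (β + 2) / 2) * s + (s - 1) ^ 4
        + (6 - β) / 2 * s * (s - 1) ^ 2 := by ring
  rw [hdecomp]
  have h₁ : 0 ≤ (α + (β + 2) / 2) * s ^ 3 := mul_nonneg (by linarith) (by positivity)
  have h₂ : 0 ≤ (γ + (β + 2) / 2) * s := mul_nonneg (by linarith) hs
  have h₃ : 0 ≤ (s - 1) ^ 4 := by positivity
  have h₄ : 0 ≤ (6 - β) / 2 * s * (s - 1) ^ 2 :=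
    mul_nonneg (mul_nonneg (by linarith) hs) (sq_nonneg _)
  linarith

theorem quartic_eq_pow_four_mul_normalized {K : Type*} [Field K] {u v : K} (hu : u ≠ 0)
    (hv : v ≠ 0) (b c d t : K) :
    u ^ 4 * t ^ 4 + b * t ^ 3 + c * t ^ 2 + d * t + v ^ 4 =
      v ^ 4 * ((u * t / v) ^ 4 + b * (u ^ 3)⁻¹ * v⁻¹ * (u * t / v) ^ 3
        + c * (u ^ 2)⁻¹ * (v ^ 2)⁻¹ * (u * t / v) ^ 2 + d * u⁻¹ * (v ^ 3)⁻¹ * (u * t / v) + 1) := by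
  field_simp

theorem Real.exists_pos_pow_four_eq {x : ℝ} (hx : 0 < x) : ∃ u, 0 < u ∧ u ^ 4 = x :=
  ⟨x ^ (4⁻¹ : ℝ), by positivity, by exact_mod_cast Real.rpow_inv_natCast_pow hx.le four_ne_zero⟩

theorem quartic_nonneg_on_pos_of_beta_le_six (a b c d e : ℝ) (ha : 0 < a) (he : 0 < e)
    (hβ : c * a ^ (-(1:ℝ)/2) * e ^ (-(1:ℝ)/2) ≤ 6)
    (hα : -((c * a ^ (-(1:ℝ)/2) * e ^ (-(1:ℝ)/2) + 2) / 2)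
        < b * a ^ (-(3:ℝ)/4) * e ^ (-(1:ℝ)/4))
    (hγ : -((c * a ^ (-(1:ℝ)/2) * e ^ (-(1:ℝ)/2) + 2) / 2)
        < d * a ^ (-(1:ℝ)/4) * e ^ (-(3:ℝ)/4)) :
    ∀ t : ℝ, 0 < t → 0 ≤ a * t ^ 4 + b * t ^ 3 + c * t ^ 2 + d * t + e := by
  obtain ⟨u, hu, rfl⟩ := Real.exists_pos_pow_four_eq ha
  obtain ⟨v, hv, rfl⟩ := Real.exists_pos_pow_four_eq he
  simp only [← Real.rpow_natCast_mul hu.le, ← Real.rpow_natCast_mul hv.le] at hβ hα hγ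
  norm_num [Real.rpow_neg_one] at hβ hα hγ
  intro t ht
  rw [quartic_eq_pow_four_mul_normalized hu.ne' hv.ne']
  exact mul_nonneg (by positivity) (normalized_quartic_nonneg (by positivity) hβ hα.le hγ.le)
end

section
/- Let g(t) = at⁴ + bt³ + ct² + dt + e with a > 0 and e > 0, and set α = b a^(−3/4) e^(−1/4), β = c a^(−1/2) e^(−1/2), γ = d a^(−1/4) e^(−3/4). If β > 6, α > −2√(β−2) and γ > −2√(β−2), then g(t) ≥ 0 for all t > 0. -/
/-!
Substituting `t = a^(-1/4) e^(1/4) s` turns `g` into `e` times the normalized quartic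
`s⁴ + α s³ + β s² + γ s + 1`. With `q = √(β - 2)` this equals
`(s² - q s + 1)² + (α + 2q) s³ + (γ + 2q) s`, which is nonnegative for `s ≥ 0`.
-/

open Real

def normalizedQuartic (α β γ s : ℝ) : ℝ := s ^ 4 + α * s ^ 3 + β * s ^ 2 + γ * s + 1

lemma normalizedQuartic_eq_sq_add {α β γ q : ℝ} (hq : q ^ 2 = β - 2) (s : ℝ) :
    normalizedQuartic α β γ s =
      (s ^ 2 - q * s + 1) ^ 2 + (α + 2 * q) * s ^ 3 + (γ + 2 * q) * s := by
  unfold normalizedQuartic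
  linear_combination (-s ^ 2) * hq

lemma normalizedQuartic_nonneg {α β γ s : ℝ} (hβ : 2 ≤ β) (hα : -(2 * √(β - 2)) ≤ α)
    (hγ : -(2 * √(β - 2)) ≤ γ) (hs : 0 ≤ s) : 0 ≤ normalizedQuartic α β γ s := by
  rw [normalizedQuartic_eq_sq_add (sq_sqrt (sub_nonneg.mpr hβ))]
  have hα' : 0 ≤ α + 2 * √(β - 2) := by linarith
  have hγ' : 0 ≤ γ + 2 * √(β - 2) := by linarith
  positivity

lemma rpow_eq_rpow_one_div_zpow {x : ℝ} (hx : 0 ≤ x) (r : ℝ) (n : ℤ) (m : ℝ)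
    (hr : r = n / m) :
    x ^ r = (x ^ (1 / m)) ^ n := by
  rw [hr, ← rpow_mul_intCast hx, one_div_mul_eq_div]

lemma quartic_eq_mul_normalizedQuartic {a e : ℝ} (ha : 0 < a) (he : 0 < e) (b c d t : ℝ) :
    a * t ^ 4 + b * t ^ 3 + c * t ^ 2 + d * t + e =
      e * normalizedQuartic (b * a ^ (-(3:ℝ)/4) * e ^ (-(1:ℝ)/4))
        (c * a ^ (-(1:ℝ)/2) * e ^ (-(1:ℝ)/2)) (d * a ^ (-(1:ℝ)/4) * e ^ (-(3:ℝ)/4))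
        (a ^ ((1:ℝ)/4) * e ^ (-(1:ℝ)/4) * t) := by
  have hroot {x : ℝ} (hx : 0 < x) (r : ℝ) (n : ℤ) (hr : r = n / 4) :=
    rpow_eq_rpow_one_div_zpow hx.le r n 4 hr
  rw [hroot ha (-(3:ℝ)/4) (-3) (by norm_num), hroot ha (-(1:ℝ)/2) (-2) (by norm_num),
    hroot ha (-(1:ℝ)/4) (-1) (by norm_num), hroot he (-(3:ℝ)/4) (-3) (by norm_num),
    hroot he (-(1:ℝ)/2) (-2) (by norm_num), hroot he (-(1:ℝ)/4) (-1) (by norm_num)]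
  have ha4 : a = (a ^ ((1:ℝ)/4)) ^ (4:ℤ) := (rpow_one a).symm.trans (hroot ha 1 4 (by norm_num))
  have he4 : e = (e ^ ((1:ℝ)/4)) ^ (4:ℤ) := (rpow_one e).symm.trans (hroot he 1 4 (by norm_num))
  have hA : 0 < a ^ ((1:ℝ)/4) := by positivity
  have hE : 0 < e ^ ((1:ℝ)/4) := by positivity
  generalize a ^ ((1:ℝ)/4) = A at hA ha4 ⊢
  generalize e ^ ((1:ℝ)/4) = E at hE he4 ⊢
  subst ha4 he4
  unfold normalizedQuartic
  field_simp

theorem quartic_nonneg_on_pos_of_beta_gt_six (a b c d e : ℝ) (ha : 0 < a) (he : 0 < e)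
    (hβ : 6 < c * a ^ (-(1:ℝ)/2) * e ^ (-(1:ℝ)/2))
    (hα : -(2 * Real.sqrt (c * a ^ (-(1:ℝ)/2) * e ^ (-(1:ℝ)/2) - 2))
        < b * a ^ (-(3:ℝ)/4) * e ^ (-(1:ℝ)/4))
    (hγ : -(2 * Real.sqrt (c * a ^ (-(1:ℝ)/2) * e ^ (-(1:ℝ)/2) - 2))
        < d * a ^ (-(1:ℝ)/4) * e ^ (-(3:ℝ)/4)) :
    ∀ t : ℝ, 0 < t → 0 ≤ a * t ^ 4 + b * t ^ 3 + c * t ^ 2 + d * t + e := by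
  intro t ht
  rw [quartic_eq_mul_normalizedQuartic ha he]
  exact mul_nonneg he.le
    (normalizedQuartic_nonneg (by linarith) hα.le hγ.le (by positivity))
end

section
/- Let A be a 4th order 2-dimensional symmetric tensor with a₁₁₁₁ > 0 and a₂₂₂₂ > 0. If a₁₂₂₁ ≤ √(a₁₁₁₁ a₂₂₂₂), 4a₁₂₁₁·(a₂₂₂₂)^(1/4) + (a₁₁₁₁)^(1/4)·(3a₁₂₂₁ + √(a₁₁₁₁ a₂₂₂₂)) > 0, and 4a₁₂₂₂·(a₁₁₁₁)^(1/4) + (a₂₂₂₂)^(1/4)·(3a₁₂₂₁ + √(a₁₁₁₁ a₂₂₂₂)) > 0, then A is copositive. -/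
/-! Write a₁₁₁₁ = α⁴ and a₂₂₂₂ = β⁴ with α, β > 0, so that √(a₁₁₁₁ a₂₂₂₂) = α²β². Then
αβ·Ax⁴ = αβ(αx₁ - βx₂)⁴ + 3(α²β² - a₁₂₂₁)x₁x₂(αx₁ - βx₂)² + α·E₁x₁³x₂ + β·E₂x₁x₂³,
where E₁, E₂ are the two quantities assumed positive; every term on the right is nonnegative
on the nonnegative quadrant. -/

theorem quartic_nonneg_of_fourth_roots {α β b c d x y : ℝ} (hα : 0 < α) (hβ : 0 < β)
    (hc : c ≤ α ^ 2 * β ^ 2) (hb : 0 ≤ 4 * b * β + α * (3 * c + α ^ 2 * β ^ 2))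
    (hd : 0 ≤ 4 * d * α + β * (3 * c + α ^ 2 * β ^ 2)) (hx : 0 ≤ x) (hy : 0 ≤ y) :
    0 ≤ α ^ 4 * x ^ 4 + 4 * b * x ^ 3 * y + 6 * c * x ^ 2 * y ^ 2 + 4 * d * x * y ^ 3
      + β ^ 4 * y ^ 4 := by
  have hsos : α * β * (α ^ 4 * x ^ 4 + 4 * b * x ^ 3 * y + 6 * c * x ^ 2 * y ^ 2
        + 4 * d * x * y ^ 3 + β ^ 4 * y ^ 4)
      = α * β * (α * x - β * y) ^ 4
        + 3 * (α ^ 2 * β ^ 2 - c) * (x * y) * (α * x - β * y) ^ 2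
        + α * (4 * b * β + α * (3 * c + α ^ 2 * β ^ 2)) * x ^ 3 * y
        + β * (4 * d * α + β * (3 * c + α ^ 2 * β ^ 2)) * x * y ^ 3 := by
    ring
  rw [← mul_nonneg_iff_of_pos_left (mul_pos hα hβ), hsos]
  have hc' : 0 ≤ α ^ 2 * β ^ 2 - c := sub_nonneg.mpr hc
  positivity

theorem Real.rpow_one_div_four_pow_four {a : ℝ} (ha : 0 ≤ a) : (a ^ ((1 : ℝ) / 4)) ^ 4 = a := by
  simpa using Real.rpow_inv_natCast_pow ha (n := 4) (by norm_num)

theorem Real.sqrt_mul_eq_rpow_one_div_four {a b : ℝ} (ha : 0 ≤ a) (hb : 0 ≤ b) :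
    √(a * b) = (a ^ ((1 : ℝ) / 4)) ^ 2 * (b ^ ((1 : ℝ) / 4)) ^ 2 := by
  rw [Real.sqrt_eq_iff_mul_self_eq (by positivity) (by positivity)]
  nth_rw 1 [← Real.rpow_one_div_four_pow_four ha, ← Real.rpow_one_div_four_pow_four hb]
  ring

theorem copositive_dim2_case1 (a1111 a1211 a1221 a1222 a2222 : ℝ)
    (h1 : 0 < a1111) (h2 : 0 < a2222)
    (hc1 : a1221 ≤ Real.sqrt (a1111 * a2222))
    (hc2 : 0 < 4 * a1211 * a2222 ^ ((1:ℝ)/4)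
        + a1111 ^ ((1:ℝ)/4) * (3 * a1221 + Real.sqrt (a1111 * a2222)))
    (hc3 : 0 < 4 * a1222 * a1111 ^ ((1:ℝ)/4)
        + a2222 ^ ((1:ℝ)/4) * (3 * a1221 + Real.sqrt (a1111 * a2222))) :
    ∀ x1 x2 : ℝ, 0 ≤ x1 → 0 ≤ x2 →
      0 ≤ a1111 * x1 ^ 4 + 4 * a1211 * x1 ^ 3 * x2 + 6 * a1221 * x1 ^ 2 * x2 ^ 2
          + 4 * a1222 * x1 * x2 ^ 3 + a2222 * x2 ^ 4 := by
  intro x1 x2 hx1 hx2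
  rw [Real.sqrt_mul_eq_rpow_one_div_four h1.le h2.le] at hc1 hc2 hc3
  have h := quartic_nonneg_of_fourth_roots (Real.rpow_pos_of_pos h1 _)
    (Real.rpow_pos_of_pos h2 _) hc1 hc2.le hc3.le hx1 hx2
  rwa [Real.rpow_one_div_four_pow_four h1.le, Real.rpow_one_div_four_pow_four h2.le] at h
end

section
/- Let A be a 4th order 2-dimensional symmetric tensor with a₁₁₁₁ > 0 and a₂₂₂₂ > 0. If a₁₂₂₁ > √(a₁₁₁₁ a₂₂₂₂), 2a₁₂₁₁ + √(6a₁₂₂₁a₁₁₁₁ − 2a₁₁₁₁√(a₁₁₁₁a₂₂₂₂)) > 0, and 2a₁₂₂₂ + √(6a₁₂₂₁a₂₂₂₂ − 2a₂₂₂₂√(a₁₁₁₁a₂₂₂₂)) > 0, then A is copositive. -/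
/-! With `α = √a₁₁₁₁`, `ε = √a₂₂₂₂` and `ρ = √(6a₁₂₂₁ - 2αε)` the form has the certificate
`Ax⁴ = (α x₁² - ρ x₁x₂ + ε x₂²)² + 2x₁x₂((2a₁₂₁₁ + αρ) x₁² + (2a₁₂₂₂ + ερ) x₂²)`,
and the hypotheses say exactly that the two coefficients in the second summand are positive. -/

theorem quartic_eq_sq_add_mul {a1111 a1211 a1221 a1222 a2222 α ε ρ : ℝ}
    (hα : α ^ 2 = a1111) (hε : ε ^ 2 = a2222) (hρ : ρ ^ 2 = 6 * a1221 - 2 * (α * ε))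
    (x1 x2 : ℝ) :
    a1111 * x1 ^ 4 + 4 * a1211 * x1 ^ 3 * x2 + 6 * a1221 * x1 ^ 2 * x2 ^ 2
        + 4 * a1222 * x1 * x2 ^ 3 + a2222 * x2 ^ 4
      = (α * x1 ^ 2 - ρ * (x1 * x2) + ε * x2 ^ 2) ^ 2
        + 2 * (x1 * x2) * ((2 * a1211 + α * ρ) * x1 ^ 2 + (2 * a1222 + ε * ρ) * x2 ^ 2) := by
  linear_combination -x1 ^ 4 * hα - x2 ^ 4 * hε - x1 ^ 2 * x2 ^ 2 * hρ

theorem quartic_nonneg_of_sq_add_mul {a1111 a1211 a1221 a1222 a2222 α ε ρ : ℝ}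
    (hα : α ^ 2 = a1111) (hε : ε ^ 2 = a2222) (hρ : ρ ^ 2 = 6 * a1221 - 2 * (α * ε))
    (hb : 0 ≤ 2 * a1211 + α * ρ) (hd : 0 ≤ 2 * a1222 + ε * ρ)
    {x1 x2 : ℝ} (hx1 : 0 ≤ x1) (hx2 : 0 ≤ x2) :
    0 ≤ a1111 * x1 ^ 4 + 4 * a1211 * x1 ^ 3 * x2 + 6 * a1221 * x1 ^ 2 * x2 ^ 2
        + 4 * a1222 * x1 * x2 ^ 3 + a2222 * x2 ^ 4 := by
  rw [quartic_eq_sq_add_mul hα hε hρ]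
  have := mul_nonneg hx1 hx2
  positivity

theorem copositive_dim2_case2 (a1111 a1211 a1221 a1222 a2222 : ℝ)
    (h1 : 0 < a1111) (h2 : 0 < a2222)
    (hc1 : Real.sqrt (a1111 * a2222) < a1221)
    (hc2 : 0 < 2 * a1211
        + Real.sqrt (6 * a1221 * a1111 - 2 * a1111 * Real.sqrt (a1111 * a2222)))
    (hc3 : 0 < 2 * a1222
        + Real.sqrt (6 * a1221 * a2222 - 2 * a2222 * Real.sqrt (a1111 * a2222))) :
    ∀ x1 x2 : ℝ, 0 ≤ x1 → 0 ≤ x2 →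
      0 ≤ a1111 * x1 ^ 4 + 4 * a1211 * x1 ^ 3 * x2 + 6 * a1221 * x1 ^ 2 * x2 ^ 2
          + 4 * a1222 * x1 * x2 ^ 3 + a2222 * x2 ^ 4 := by
  intro x1 x2 hx1 hx2
  have hS : √(a1111 * a2222) = √a1111 * √a2222 := Real.sqrt_mul h1.le _
  set M := 6 * a1221 - 2 * (√a1111 * √a2222)
  have hM : 0 ≤ M := by
    have := Real.sqrt_nonneg (a1111 * a2222)
    linarith
  have hb : 0 < 2 * a1211 + √a1111 * √M := by
    rwa [hS, show 6 * a1221 * a1111 - 2 * a1111 * (√a1111 * √a2222) = a1111 * M by ring,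
      Real.sqrt_mul h1.le] at hc2
  have hd : 0 < 2 * a1222 + √a2222 * √M := by
    rwa [hS, show 6 * a1221 * a2222 - 2 * a2222 * (√a1111 * √a2222) = a2222 * M by ring,
      Real.sqrt_mul h2.le] at hc3
  exact quartic_nonneg_of_sq_add_mul (Real.sq_sqrt h1.le) (Real.sq_sqrt h2.le)
    (Real.sq_sqrt hM) hb.le hd.le hx1 hx2
end

section
/- Let A be a 4th order 2-dimensional symmetric tensor. If a₁₁₁₁ ≥ 0, a₂₂₂₂ ≥ 0, a₁₁₁₂ ≥ 0, a₂₂₂₁ ≥ 0, and 3a₁₂₂₁ + √(a₁₁₁₁a₂₂₂₂) + 4√(a₁₁₁₂a₂₂₂₁) ≥ 0, then A is copositive; if all these inequalities are strict, A is strictly copositive. -/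
/-!
With `sᵢ = √aᵢ`, the quartic form is the sum of squares
`(s₁₁₁₁ x₁² - s₂₂₂₂ x₂²)² + 4 x₁ x₂ (s₁₁₁₂ x₁ - s₂₂₂₁ x₂)² + 2 (3 a₁₂₂₁ + s₁₁₁₁ s₂₂₂₂ + 4 s₁₁₁₂ s₂₂₂₁) (x₁ x₂)²`,
each term of which is nonnegative on the nonnegative quadrant. In the strict case the last term is
positive off the axes, and on an axis the form reduces to `a₁₁₁₁ x₁⁴` or `a₂₂₂₂ x₂⁴`.
-/

open Real

def quarticForm (a1111 a1112 a1221 a2221 a2222 x1 x2 : ℝ) : ℝ :=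
  a1111 * x1 ^ 4 + 4 * a1112 * x1 ^ 3 * x2 + 6 * a1221 * x1 ^ 2 * x2 ^ 2
    + 4 * a2221 * x1 * x2 ^ 3 + a2222 * x2 ^ 4

section

variable {a1111 a1112 a1221 a2221 a2222 : ℝ}

theorem quarticForm_eq_sos (h1111 : 0 ≤ a1111) (h1112 : 0 ≤ a1112) (h2221 : 0 ≤ a2221)
    (h2222 : 0 ≤ a2222) (x1 x2 : ℝ) :
    quarticForm a1111 a1112 a1221 a2221 a2222 x1 x2 =
      (√a1111 * x1 ^ 2 - √a2222 * x2 ^ 2) ^ 2 + 4 * (x1 * x2) * (√a1112 * x1 - √a2221 * x2) ^ 2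
        + 2 * (3 * a1221 + √(a1111 * a2222) + 4 * √(a1112 * a2221)) * (x1 * x2) ^ 2 := by
  rw [sqrt_mul h1111, sqrt_mul h1112, quarticForm]
  linear_combination -(x1 ^ 4 * sq_sqrt h1111 + 4 * x1 ^ 3 * x2 * sq_sqrt h1112
    + 4 * x1 * x2 ^ 3 * sq_sqrt h2221 + x2 ^ 4 * sq_sqrt h2222)

theorem quarticForm_nonneg (h1111 : 0 ≤ a1111) (h1112 : 0 ≤ a1112) (h2221 : 0 ≤ a2221)
    (h2222 : 0 ≤ a2222)
    (hmix : 0 ≤ 3 * a1221 + √(a1111 * a2222) + 4 * √(a1112 * a2221))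
    {x1 x2 : ℝ} (hx1 : 0 ≤ x1) (hx2 : 0 ≤ x2) :
    0 ≤ quarticForm a1111 a1112 a1221 a2221 a2222 x1 x2 := by
  rw [quarticForm_eq_sos h1111 h1112 h2221 h2222]
  have := mul_nonneg hx1 hx2
  positivity

theorem quarticForm_pos (h1111 : 0 < a1111) (h1112 : 0 ≤ a1112) (h2221 : 0 ≤ a2221)
    (h2222 : 0 < a2222)
    (hmix : 0 < 3 * a1221 + √(a1111 * a2222) + 4 * √(a1112 * a2221))
    {x1 x2 : ℝ} (hx1 : 0 ≤ x1) (hx2 : 0 ≤ x2) (hx : ¬(x1 = 0 ∧ x2 = 0)) :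
    0 < quarticForm a1111 a1112 a1221 a2221 a2222 x1 x2 := by
  rcases hx1.eq_or_lt with rfl | hx1
  · have hx2 : x2 ≠ 0 := fun h => hx ⟨rfl, h⟩
    simp only [quarticForm]
    ring_nf
    positivity
  rcases hx2.eq_or_lt with rfl | hx2
  · simp only [quarticForm]
    ring_nf
    positivity
  rw [quarticForm_eq_sos h1111.le h1112 h2221 h2222.le]
  have := mul_pos hx1 hx2
  positivity

end

theorem copositive_dim2_sufficient (a1111 a1112 a1221 a2221 a2222 : ℝ) :
    ((0 ≤ a1111 ∧ 0 ≤ a2222 ∧ 0 ≤ a1112 ∧ 0 ≤ a2221 ∧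
        0 ≤ 3 * a1221 + Real.sqrt (a1111 * a2222) + 4 * Real.sqrt (a1112 * a2221)) →
      ∀ x1 x2 : ℝ, 0 ≤ x1 → 0 ≤ x2 →
        0 ≤ a1111 * x1 ^ 4 + 4 * a1112 * x1 ^ 3 * x2 + 6 * a1221 * x1 ^ 2 * x2 ^ 2
            + 4 * a2221 * x1 * x2 ^ 3 + a2222 * x2 ^ 4) ∧
    ((0 < a1111 ∧ 0 < a2222 ∧ 0 < a1112 ∧ 0 < a2221 ∧
        0 < 3 * a1221 + Real.sqrt (a1111 * a2222) + 4 * Real.sqrt (a1112 * a2221)) →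
      ∀ x1 x2 : ℝ, 0 ≤ x1 → 0 ≤ x2 → ¬(x1 = 0 ∧ x2 = 0) →
        0 < a1111 * x1 ^ 4 + 4 * a1112 * x1 ^ 3 * x2 + 6 * a1221 * x1 ^ 2 * x2 ^ 2
            + 4 * a2221 * x1 * x2 ^ 3 + a2222 * x2 ^ 4) :=
  ⟨fun ⟨h1111, h2222, h1112, h2221, hmix⟩ _ _ hx1 hx2 =>
      quarticForm_nonneg h1111 h1112 h2221 h2222 hmix hx1 hx2,
    fun ⟨h1111, h2222, h1112, h2221, hmix⟩ _ _ hx1 hx2 hx =>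
      quarticForm_pos h1111 h1112.le h2221.le h2222 hmix hx1 hx2 hx⟩
end

section
/- If A is a strictly copositive 4th order 2-dimensional symmetric tensor, then 2a₁₁₁₂√(a₂₂₂₂) + (3a₁₂₂₁ + √(a₁₁₁₁a₂₂₂₂))·(a₁₁₁₁a₂₂₂₂)^(1/4) + 2a₁₂₂₂√(a₁₁₁₁) > 0. -/
/-!
Evaluate the form at `x = (a₂₂₂₂^{1/4}, a₁₁₁₁^{1/4})`. With `p = a₁₁₁₁^{1/4}` and `q = a₂₂₂₂^{1/4}`
this gives `Ax⁴ = 2pq · (2a₁₁₁₂q² + (3a₁₂₂₁ + p²q²)pq + 2a₁₂₂₂p²)`, and the second factor is the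
claimed expression because `√a₁₁₁₁ = p²`, `√a₂₂₂₂ = q²` and `(a₁₁₁₁a₂₂₂₂)^{1/4} = pq`.
-/

namespace Real

theorem rpow_one_div_four_pow_four_s14 {a : ℝ} (ha : 0 ≤ a) : (a ^ ((1 : ℝ) / 4)) ^ 4 = a := by
  rw [← rpow_natCast, ← rpow_mul ha]
  norm_num

theorem sqrt_eq_rpow_one_div_four_sq {a : ℝ} (ha : 0 ≤ a) : √a = (a ^ ((1 : ℝ) / 4)) ^ 2 := by
  rw [sqrt_eq_rpow, ← rpow_natCast, ← rpow_mul ha]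
  norm_num

end Real

theorem binary_quartic_at_swapped_roots (b c d p q : ℝ) :
    p ^ 4 * q ^ 4 + 4 * b * q ^ 3 * p + 6 * c * q ^ 2 * p ^ 2 + 4 * d * q * p ^ 3 + q ^ 4 * p ^ 4
      = 2 * p * q * (2 * b * q ^ 2 + (3 * c + p ^ 2 * q ^ 2) * (p * q) + 2 * d * p ^ 2) := by
  ring

theorem strictly_copositive_necessary (a1111 a1112 a1221 a1222 a2222 : ℝ)
    (h : ∀ x1 x2 : ℝ, 0 ≤ x1 → 0 ≤ x2 → ¬(x1 = 0 ∧ x2 = 0) →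
      0 < a1111 * x1 ^ 4 + 4 * a1112 * x1 ^ 3 * x2 + 6 * a1221 * x1 ^ 2 * x2 ^ 2
          + 4 * a1222 * x1 * x2 ^ 3 + a2222 * x2 ^ 4) :
    0 < 2 * a1112 * Real.sqrt a2222
        + (3 * a1221 + Real.sqrt (a1111 * a2222)) * (a1111 * a2222) ^ ((1:ℝ)/4)
        + 2 * a1222 * Real.sqrt a1111 := by
  have h1 : 0 < a1111 := by simpa using h 1 0 zero_le_one le_rfl (by simp)
  have h2 : 0 < a2222 := by simpa using h 0 1 le_rfl zero_le_one (by simp)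
  set p := a1111 ^ ((1 : ℝ) / 4)
  set q := a2222 ^ ((1 : ℝ) / 4)
  have hp : 0 < p := by positivity
  have hq : 0 < q := by positivity
  have hpq : 0 < 2 * p * q := by positivity
  rw [Real.sqrt_mul h1.le, Real.mul_rpow h1.le h2.le, Real.sqrt_eq_rpow_one_div_four_sq h1.le,
    Real.sqrt_eq_rpow_one_div_four_sq h2.le]
  have hval := h q p hq.le hp.le fun h0 => hq.ne' h0.1
  rw [← Real.rpow_one_div_four_pow_four_s14 h1.le, ← Real.rpow_one_div_four_pow_four_s14 h2.le,
    binary_quartic_at_swapped_roots] at hval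
  exact pos_of_mul_pos_right hval hpq.le
end

section
/- Let λ₁, λ₂, λ_S, λ₃, λ₄, λ_{S1}, λ_{S2}, μ be real numbers with μ ≥ 0 (μ = |λ_{S12}|ρ) such that λ₁ > 0, λ₂ > 0, λ_S > 0, λ₃ + λ₄ρ² > 0 (denote κ = λ₃ + λ₄ρ² > 0), λ_{S1} > 0, λ_{S2} > 0, −μ + √(2λ_{S1}λ_{S2}) > 0, and √(λ_Sλ_{S1}λ_{S2}) − μ√(λ_S) + √(2λ_S √(λ_{S1}λ_{S2})(−μ + √(2λ_{S1}λ_{S2}))) > 0. Then V(h₁,h₂,s) = λ₁h₁⁴ + λ₂h₂⁴ + κh₁²h₂² + λ_S s⁴ + λ_{S1}s²h₁² + λ_{S2}s²h₂² − μ s²h₁h₂ > 0 for all (h₁,h₂,s) ≥ 0 with (h₁,h₂,s) ≠ 0. -/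
/-!
The mixed term `μ s² h₁ h₂` is the only negative one, and it is already absorbed by
`λ_{S1} s² h₁² + λ_{S2} s² h₂²`: by AM-GM this sum is at least `2 √(λ_{S1} λ_{S2}) s² h₁ h₂`, and
`μ < √(2 λ_{S1} λ_{S2}) ≤ 2 √(λ_{S1} λ_{S2})`. What remains, `λ₁ h₁⁴ + λ₂ h₂⁴ + κ h₁² h₂² + λ_S s⁴`,
is positive away from the origin.
-/

theorem mul_mul_le_add_of_le_two_sqrt {a b m x y : ℝ} (ha : 0 ≤ a) (hb : 0 ≤ b)
    (hx : 0 ≤ x) (hy : 0 ≤ y) (hm : m ≤ 2 * √(a * b)) :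
    m * x * y ≤ a * x ^ 2 + b * y ^ 2 := by
  have hamgm : 2 * √(a * b) * (x * y) ≤ a * x ^ 2 + b * y ^ 2 := by
    rw [Real.sqrt_mul ha]
    nlinarith [sq_nonneg (√a * x - √b * y), Real.sq_sqrt ha, Real.sq_sqrt hb]
  calc m * x * y = m * (x * y) := mul_assoc _ _ _
    _ ≤ 2 * √(a * b) * (x * y) := mul_le_mul_of_nonneg_right hm (mul_nonneg hx hy)
    _ ≤ a * x ^ 2 + b * y ^ 2 := hamgm

theorem sqrt_two_mul_mul_le_two_mul_sqrt (a b : ℝ) :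
    √(2 * a * b) ≤ 2 * √(a * b) := by
  rw [mul_assoc, Real.sqrt_mul zero_le_two]
  have : √2 ≤ 2 := by
    rw [Real.sqrt_le_left zero_le_two]; norm_num
  exact mul_le_mul_of_nonneg_right this (Real.sqrt_nonneg _)

theorem pure_quartic_pos {l1 l2 κ lS a b s : ℝ} (h1 : 0 < l1) (h2 : 0 < l2) (hκ : 0 ≤ κ)
    (hS : 0 < lS) (hne : ¬(a = 0 ∧ b = 0 ∧ s = 0)) :
    0 < l1 * a ^ 4 + l2 * b ^ 4 + κ * a ^ 2 * b ^ 2 + lS * s ^ 4 := by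
  rcases not_and_or.mp hne with ha | hne
  · positivity
  rcases not_and_or.mp hne with hb | hs
  · positivity
  · positivity

theorem Z3_dark_matter_vacuum_stability_general (l1 l2 lS κ lS1 lS2 μ : ℝ)
    (h1 : 0 < l1) (h2 : 0 < l2) (hS : 0 < lS) (hκ : 0 < κ)
    (hS1 : 0 < lS1) (hS2 : 0 < lS2)
    (h3 : 0 < -μ + Real.sqrt (2 * lS1 * lS2)) :
    ∀ h1' h2' s : ℝ, 0 ≤ h1' → 0 ≤ h2' → 0 ≤ s → ¬(h1' = 0 ∧ h2' = 0 ∧ s = 0) →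
      0 < l1 * h1' ^ 4 + l2 * h2' ^ 4 + κ * h1' ^ 2 * h2' ^ 2 + lS * s ^ 4
          + lS1 * s ^ 2 * h1' ^ 2 + lS2 * s ^ 2 * h2' ^ 2 - μ * s ^ 2 * h1' * h2' := by
  intro a b s ha hb hs hne
  have hμ : μ ≤ 2 * √(lS1 * lS2) :=
    (by linarith : μ ≤ √(2 * lS1 * lS2)).trans (sqrt_two_mul_mul_le_two_mul_sqrt lS1 lS2)
  have hcross := mul_mul_le_add_of_le_two_sqrt hS1.le hS2.le
    (mul_nonneg hs ha) (mul_nonneg hs hb) hμ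
  have hquartic := pure_quartic_pos (a := a) (b := b) h1 h2 hκ.le hS hne
  linear_combination hquartic + hcross

theorem Z3_dark_matter_vacuum_stability (l1 l2 lS κ lS1 lS2 μ : ℝ)
    (hμ : 0 ≤ μ) (h1 : 0 < l1) (h2 : 0 < l2) (hS : 0 < lS) (hκ : 0 < κ)
    (hS1 : 0 < lS1) (hS2 : 0 < lS2)
    (h3 : 0 < -μ + Real.sqrt (2 * lS1 * lS2))
    (h4 : 0 < Real.sqrt (lS * lS1 * lS2) - μ * Real.sqrt lS
        + Real.sqrt (2 * lS * Real.sqrt (lS1 * lS2) * (-μ + Real.sqrt (2 * lS1 * lS2)))) :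
    ∀ h1' h2' s : ℝ, 0 ≤ h1' → 0 ≤ h2' → 0 ≤ s → ¬(h1' = 0 ∧ h2' = 0 ∧ s = 0) →
      0 < l1 * h1' ^ 4 + l2 * h2' ^ 4 + κ * h1' ^ 2 * h2' ^ 2 + lS * s ^ 4
          + lS1 * s ^ 2 * h1' ^ 2 + lS2 * s ^ 2 * h2' ^ 2 - μ * s ^ 2 * h1' * h2' :=
  Z3_dark_matter_vacuum_stability_general l1 l2 lS κ lS1 lS2 μ h1 h2 hS hκ hS1 hS2 h3
end

section
/- Let F(A,B,C,a,b,c) denote the quadratic form F(1−t, tv, tw) = A(1−t)² + 2(bw + cv)t(1−t) + (Bv² + 2avw + Cw²)t², where w = 1−v. If A ≥ 0, B ≥ 0, C ≥ 0, a + √(BC) ≥ 0, b + √(AC) ≥ 0, c + √(AB) ≥ 0, and √(ABC) + a√A + b√B + c√C + √(2(a+√(BC))(b+√(AC))(c+√(AB))) ≥ 0, then F(1−t, tv, tw) ≥ 0 for all t ∈ [0,1] and all v ∈ [0,1] with w = 1−v. -/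
/-!
Put `x = 1 - t`, `y = t v`, `z = t w` and `A = p², B = q², C = r²`, so that `F` is the ternary
quadratic form `Q = A x² + B y² + C z² + 2a yz + 2b xz + 2c xy` on the nonnegative orthant, with
`Q = (p x - q y - r z)² + 2(a - qr) yz + 2(b + pr) xz + 2(c + pq) xy`.
If some off-diagonal coefficient dominates, e.g. `a ≥ qr`, this decomposition is already
nonnegative. Otherwise `p, q, r > 0` and, with `S = pqr + ap + bq + cr`, either `S ≥ 0`, and then
`p Q ≥ 2 S yz` whenever `yz/p` is the least of `yz/p, xz/q, xy/r`; or `S < 0`, and then the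
hypothesis says `S² ≤ 2(a + qr)(b + pr)(c + pq)`, i.e. the determinant of the form is nonnegative,
so the form is positive semidefinite on all of `ℝ³`.
-/

def ternaryForm (A B C a b c x y z : ℝ) : ℝ :=
  A * x ^ 2 + B * y ^ 2 + C * z ^ 2 + 2 * a * (y * z) + 2 * b * (x * z) + 2 * c * (x * y)

section

variable {A B C a b c p q r x y z : ℝ}

lemma ternaryForm_swap_xy :
    ternaryForm A B C a b c x y z = ternaryForm B A C b a c y x z := by
  unfold ternaryForm; ring

lemma ternaryForm_swap_xz :
    ternaryForm A B C a b c x y z = ternaryForm C B A c b a z y x := by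
  unfold ternaryForm; ring

lemma ternaryForm_nonneg_of_det_nonneg (hA : 0 < A) (hAB : 0 < A * B - c ^ 2)
    (hdet : 0 ≤ A * B * C + 2 * a * b * c - A * a ^ 2 - B * b ^ 2 - C * c ^ 2) :
    0 ≤ ternaryForm A B C a b c x y z := by
  -- `A (AB - c²) Q = (AB - c²)(Ax + cy + bz)² + ((AB - c²)y + (Aa - bc)z)² + A det z²`
  unfold ternaryForm
  refine nonneg_of_mul_nonneg_right ?_ (mul_pos hA hAB)
  nlinarith [mul_nonneg hAB.le (sq_nonneg (A * x + c * y + b * z)),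
    sq_nonneg ((A * B - c ^ 2) * y + (A * a - b * c) * z),
    mul_nonneg (mul_nonneg hA.le hdet) (sq_nonneg z)]

lemma ternaryForm_sq_eq : ternaryForm (p ^ 2) (q ^ 2) (r ^ 2) a b c x y z =
    (p * x - q * y - r * z) ^ 2 + 2 * (a - q * r) * (y * z) + 2 * (b + p * r) * (x * z)
      + 2 * (c + p * q) * (x * y) := by
  unfold ternaryForm; ring

lemma ternaryForm_nonneg_of_mul_le_a (hx : 0 ≤ x) (hy : 0 ≤ y) (hz : 0 ≤ z)
    (ha : q * r ≤ a) (hb : 0 ≤ b + p * r) (hc : 0 ≤ c + p * q) :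
    0 ≤ ternaryForm (p ^ 2) (q ^ 2) (r ^ 2) a b c x y z := by
  rw [ternaryForm_sq_eq]
  have := mul_nonneg (sub_nonneg.mpr ha) (mul_nonneg hy hz)
  have := mul_nonneg hb (mul_nonneg hx hz)
  have := mul_nonneg hc (mul_nonneg hx hy)
  nlinarith [sq_nonneg (p * x - q * y - r * z)]

lemma ternaryForm_nonneg_of_mul_le (hx : 0 ≤ x) (hy : 0 ≤ y) (hz : 0 ≤ z)
    (ha : 0 ≤ a + q * r) (hb : 0 ≤ b + p * r) (hc : 0 ≤ c + p * q)
    (h : q * r ≤ a ∨ p * r ≤ b ∨ p * q ≤ c) :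
    0 ≤ ternaryForm (p ^ 2) (q ^ 2) (r ^ 2) a b c x y z := by
  rcases h with h | h | h
  · exact ternaryForm_nonneg_of_mul_le_a hx hy hz h hb hc
  · rw [ternaryForm_swap_xy]
    exact ternaryForm_nonneg_of_mul_le_a hy hx hz (by linarith) (by linarith) (by linarith)
  · rw [ternaryForm_swap_xz]
    exact ternaryForm_nonneg_of_mul_le_a hz hy hx (by linarith) (by linarith) (by linarith)

lemma ternaryForm_nonneg_of_yz_le (hp : 0 < p) (hq : 0 < q) (hr : 0 < r)
    (hy : 0 ≤ y) (hz : 0 ≤ z) (hb : 0 ≤ b + p * r) (hc : 0 ≤ c + p * q)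
    (hS : 0 ≤ p * q * r + a * p + b * q + c * r)
    (hxz : q * r * (y * z) ≤ p * r * (x * z)) (hxy : q * r * (y * z) ≤ p * q * (x * y)) :
    0 ≤ ternaryForm (p ^ 2) (q ^ 2) (r ^ 2) a b c x y z := by
  have hxz' : q * (y * z) ≤ p * (x * z) := le_of_mul_le_mul_left (by linarith) hr
  have hxy' : r * (y * z) ≤ p * (x * y) := le_of_mul_le_mul_left (by linarith) hq
  rw [ternaryForm_sq_eq]
  refine nonneg_of_mul_nonneg_right ?_ hp
  have := mul_nonneg hb (sub_nonneg.mpr hxz')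
  have := mul_nonneg hc (sub_nonneg.mpr hxy')
  have := mul_nonneg hS (mul_nonneg hy hz)
  nlinarith [mul_nonneg hp.le (sq_nonneg (p * x - q * y - r * z))]

lemma ternaryForm_nonneg_of_sum_nonneg (hp : 0 < p) (hq : 0 < q) (hr : 0 < r)
    (hx : 0 ≤ x) (hy : 0 ≤ y) (hz : 0 ≤ z)
    (ha : 0 ≤ a + q * r) (hb : 0 ≤ b + p * r) (hc : 0 ≤ c + p * q)
    (hS : 0 ≤ p * q * r + a * p + b * q + c * r) :
    0 ≤ ternaryForm (p ^ 2) (q ^ 2) (r ^ 2) a b c x y z := by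
  -- compare `yz/p`, `xz/q`, `xy/r`, each multiplied by `pqr`
  rcases le_total (q * r * (y * z)) (p * r * (x * z)) with h₁ | h₁ <;>
  rcases le_total (q * r * (y * z)) (p * q * (x * y)) with h₂ | h₂ <;>
  rcases le_total (p * r * (x * z)) (p * q * (x * y)) with h₃ | h₃
  all_goals first
    | exact ternaryForm_nonneg_of_yz_le hp hq hr hy hz hb hc hS (by linarith) (by linarith)
    | rw [ternaryForm_swap_xy]
      exact ternaryForm_nonneg_of_yz_le hq hp hr hx hz (by linarith) (by linarith)
        (by linarith) (by linarith) (by linarith)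
    | rw [ternaryForm_swap_xz]
      exact ternaryForm_nonneg_of_yz_le hr hq hp hy hx (by linarith) (by linarith)
        (by linarith) (by linarith) (by linarith)

lemma ternaryForm_nonneg (hp : 0 ≤ p) (hq : 0 ≤ q) (hr : 0 ≤ r)
    (hx : 0 ≤ x) (hy : 0 ≤ y) (hz : 0 ≤ z)
    (ha : 0 ≤ a + q * r) (hb : 0 ≤ b + p * r) (hc : 0 ≤ c + p * q)
    (hτ : 0 ≤ p * q * r + a * p + b * q + c * r
      + √(2 * (a + q * r) * (b + p * r) * (c + p * q))) :
    0 ≤ ternaryForm (p ^ 2) (q ^ 2) (r ^ 2) a b c x y z := by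
  by_cases hdom : q * r ≤ a ∨ p * r ≤ b ∨ p * q ≤ c
  · exact ternaryForm_nonneg_of_mul_le hx hy hz ha hb hc hdom
  simp only [not_or, not_le] at hdom
  obtain ⟨ha', hb', hc'⟩ := hdom
  have hp' : 0 < p := lt_of_le_of_ne hp (by rintro rfl; linarith)
  have hq' : 0 < q := lt_of_le_of_ne hq (by rintro rfl; linarith)
  have hr' : 0 < r := lt_of_le_of_ne hr (by rintro rfl; linarith)
  set S := p * q * r + a * p + b * q + c * r
  rcases le_or_gt 0 S with hS | hS
  · exact ternaryForm_nonneg_of_sum_nonneg hp' hq' hr' hx hy hz ha hb hc hS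
  have hS2 : S ^ 2 ≤ 2 * (a + q * r) * (b + p * r) * (c + p * q) :=
    neg_sq S ▸ (Real.le_sqrt' (neg_pos.mpr hS)).mp (by linarith)
  have hc₀ : 0 < c + p * q := by
    refine lt_of_le_of_ne hc fun h ↦ ?_
    rw [← h, mul_zero] at hS2
    nlinarith
  have hdet_eq : 2 * (a + q * r) * (b + p * r) * (c + p * q) - S ^ 2 = p ^ 2 * q ^ 2 * r ^ 2
      + 2 * a * b * c - p ^ 2 * a ^ 2 - q ^ 2 * b ^ 2 - r ^ 2 * c ^ 2 := by ring
  exact ternaryForm_nonneg_of_det_nonneg (by positivity) (by nlinarith) (by linarith)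

end

theorem chang_sederberg_sufficiency (A B C a b c : ℝ)
    (hA : 0 ≤ A) (hB : 0 ≤ B) (hC : 0 ≤ C)
    (ha : 0 ≤ a + Real.sqrt (B * C))
    (hb : 0 ≤ b + Real.sqrt (A * C))
    (hc : 0 ≤ c + Real.sqrt (A * B))
    (hτ : 0 ≤ Real.sqrt (A * B * C) + a * Real.sqrt A + b * Real.sqrt B + c * Real.sqrt C
        + Real.sqrt (2 * (a + Real.sqrt (B * C)) * (b + Real.sqrt (A * C))
            * (c + Real.sqrt (A * B)))) :
    ∀ t ∈ Set.Icc (0 : ℝ) 1, ∀ v ∈ Set.Icc (0 : ℝ) 1,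
      0 ≤ A * (1 - t) ^ 2 + 2 * (b * (1 - v) + c * v) * t * (1 - t)
          + (B * v ^ 2 + 2 * a * v * (1 - v) + C * (1 - v) ^ 2) * t ^ 2 := by
  rintro t ⟨ht₀, ht₁⟩ v ⟨hv₀, hv₁⟩
  simp only [Real.sqrt_mul hA, Real.sqrt_mul hB, Real.sqrt_mul (mul_nonneg hA hB)] at ha hb hc hτ
  have key := ternaryForm_nonneg (Real.sqrt_nonneg A) (Real.sqrt_nonneg B) (Real.sqrt_nonneg C)
    (x := 1 - t) (y := t * v) (z := t * (1 - v)) (by linarith) (by positivity)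
    (mul_nonneg ht₀ (by linarith)) ha hb hc hτ
  rw [Real.sq_sqrt hA, Real.sq_sqrt hB, Real.sq_sqrt hC, ternaryForm] at key
  linarith
end
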